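/- Let P be a multilinear Boolean polynomial with cls(P) = k, and let 1 ≤ j ≤ k. Let O_{j,k} be the set of all 2^{k−j+1} composite operators O_j ∘ O_{j+1} ∘ ⋯ ∘ O_k where each O_i is either R_i or J_i. Then the sum over all L ∈ O_{j,k} of ||L(P)|| is at most ||P||. -/

import Mathlib

/-!
Write `Q = I·x_k + U`. The monomials of `Q` without `x_k` make up `U = R_k Q`; those with `x_k`
give the monomials of `I` after `x_k` is removed, each losing one from its length. When
`cls Q = k` there is at least one of them, and that saving pays for the constant `1` in
`J_k Q = I + 1`. Hence `‖R_k Q‖ + ‖J_k Q‖ ≤ ‖Q‖` for every `Q` (trivially when `cls Q ≠ k`,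
where `R_k Q = Q` and `J_k Q = 0`). Summing over the choice of the outermost operator `O_j`
and inducting on the number of operators gives the theorem.
-/

open MvPolynomial

/-- The class of a Boolean polynomial: the largest `c` such that `x_c` occurs in `P`,
with variables numbered `1,…,n` (variable `Fin`-index `i` has number `i+1`);
`cls P = 0` for constants (and for `0`). -/
noncomputable def cls {n : ℕ} (P : MvPolynomial (Fin n) (ZMod 2)) : ℕ :=
  P.vars.sup fun i => (i : ℕ) + 1

/-- Writing a multilinear `P` as `P = I·x_k + U` with `I, U` not involving `x_k`,
this is `I`. -/
noncomputable def coefAt {n : ℕ} (k : Fin n) (P : MvPolynomial (Fin n) (ZMod 2)) :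
    MvPolynomial (Fin n) (ZMod 2) :=
  ∑ m ∈ P.support.filter fun m => m k = 1,
    monomial (Finsupp.erase k m) (coeff m P)

/-- Writing a multilinear `P` as `P = I·x_k + U` with `I, U` not involving `x_k`,
this is `U`. -/
noncomputable def remAt {n : ℕ} (k : Fin n) (P : MvPolynomial (Fin n) (ZMod 2)) :
    MvPolynomial (Fin n) (ZMod 2) :=
  ∑ m ∈ P.support.filter fun m => m k = 0, monomial m (coeff m P)

/-- The operator `R_k`: for `P = I·x_k + U`, `R_k(P) = U` if `cls P = k`, and
`R_k(P) = P` if `cls P < k` (in particular `R_k(0) = 0`). -/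
noncomputable def opR {n : ℕ} (k : Fin n) (P : MvPolynomial (Fin n) (ZMod 2)) :
    MvPolynomial (Fin n) (ZMod 2) :=
  if cls P = (k : ℕ) + 1 then remAt k P else P

/-- The operator `J_k`: for `P = I·x_k + U`, `J_k(P) = I + 1` if `cls P = k`, and
`J_k(P) = 0` if `cls P < k` (in particular `J_k(0) = 0`). -/
noncomputable def opJ {n : ℕ} (k : Fin n) (P : MvPolynomial (Fin n) (ZMod 2)) :
    MvPolynomial (Fin n) (ZMod 2) :=
  if cls P = (k : ℕ) + 1 then coefAt k P + 1 else 0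


/-- The length of a multilinear Boolean polynomial: the sum over its monomials of the
number of variables of the monomial, where the monomial `1` has length `1` (and
`‖0‖ = 0`). -/
noncomputable def plen {n : ℕ} (P : MvPolynomial (Fin n) (ZMod 2)) : ℕ :=
  ∑ m ∈ P.support, if m = 0 then 1 else m.support.card

/-- Apply either `R_i` (if `b = true`) or `J_i` (if `b = false`). -/
noncomputable def opE {n : ℕ} (b : Bool) (i : Fin n)
    (P : MvPolynomial (Fin n) (ZMod 2)) : MvPolynomial (Fin n) (ZMod 2) :=
  if b then opR i P else opJ i P

/-- The composite operator `O_j ∘ O_{j+1} ∘ ⋯ ∘ O_k` (applied innermost, i.e. `O_k`,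
first), where `O_i = R_i` if `ε i = true` and `O_i = J_i` if `ε i = false`. -/
noncomputable def compOp {n : ℕ} (ε : Fin n → Bool) (j k : Fin n)
    (P : MvPolynomial (Fin n) (ZMod 2)) : MvPolynomial (Fin n) (ZMod 2) :=
  (((List.finRange n).filter fun i => decide (j ≤ i ∧ i ≤ k)).foldr
    (fun i acc => opE (ε i) i acc) P)

section SumSplit

variable {ι M : Type*} [DecidableEq ι] [AddCommMonoid M]

lemma sum_extend_eq_sum_sum_update {p q : ι → Prop} [DecidablePred p] [DecidablePred q]
    [Fintype {i // p i}] [Fintype {i // q i}] {a : ι}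
    (hpq : ∀ i, p i ↔ i = a ∨ q i) (ha : ¬ q a) (g : (ι → Bool) → M) :
    ∑ η : {i // p i} → Bool, g (fun i => if h : p i then η ⟨i, h⟩ else false) =
      ∑ η : {i // q i} → Bool, ∑ b : Bool,
        g (Function.update (fun i => if h : q i then η ⟨i, h⟩ else false) a b) := by
  have hpa : p a := (hpq a).2 (Or.inl rfl)
  have hpq' : ∀ i, q i → p i := fun i hi => (hpq i).2 (Or.inr hi)
  let e : ({i // p i} → Bool) ≃ ({i // q i} → Bool) × Bool :=
    { toFun := fun η => (fun i => η ⟨i, hpq' i i.2⟩, η ⟨a, hpa⟩)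
      invFun := fun x i =>
        Function.update (fun i => if h : q i then x.1 ⟨i, h⟩ else false) a x.2 i
      left_inv := fun η => by
        funext ⟨i, hi⟩
        by_cases hia : i = a
        · subst hia; simp
        · have hqi : q i := ((hpq i).1 hi).resolve_left hia
          simp [Function.update_of_ne hia, hqi]
      right_inv := fun ⟨η, b⟩ => by
        refine Prod.ext (funext fun ⟨i, hi⟩ => ?_) (by simp)
        have hia : i ≠ a := by rintro rfl; exact ha hi
        simp [Function.update_of_ne hia, hi] }
  rw [← Fintype.sum_prod_type']
  refine Fintype.sum_equiv e _ _ fun η => congrArg g (funext fun i => ?_)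
  by_cases hia : i = a
  · subst hia; simp [e, hpa]
  · by_cases hqi : q i
    · simp [e, Function.update_of_ne hia, hqi, hpq' i hqi]
    · simp [e, hqi, hpq i, hia]

end SumSplit

lemma MvPolynomial.support_sum_monomial_subset {R σ ι : Type*} [CommSemiring R] [DecidableEq σ]
    (s : Finset ι) (f : ι → σ →₀ ℕ) (c : ι → R) :
    (∑ i ∈ s, monomial (f i) (c i)).support ⊆ s.image f :=
  support_sum.trans <| Finset.biUnion_subset.2 fun _ hi =>
    support_monomial_subset.trans <| Finset.singleton_subset_iff.2 (Finset.mem_image_of_mem f hi)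

section Length

variable {n : ℕ}

def monoLen (m : Fin n →₀ ℕ) : ℕ := if m = 0 then 1 else m.support.card

lemma plen_eq_sum_monoLen (Q : MvPolynomial (Fin n) (ZMod 2)) :
    plen Q = ∑ m ∈ Q.support, monoLen m := rfl

lemma support_remAt_subset (k : Fin n) (Q : MvPolynomial (Fin n) (ZMod 2)) :
    (remAt k Q).support ⊆ Q.support.filter fun m => m k = 0 := by
  simpa [remAt] using support_sum_monomial_subset (Q.support.filter fun m => m k = 0) id (coeff · Q)

lemma support_coefAt_subset (k : Fin n) (Q : MvPolynomial (Fin n) (ZMod 2)) :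
    (coefAt k Q).support ⊆ (Q.support.filter fun m => m k ≠ 0).image (Finsupp.erase k) := by
  refine (support_sum_monomial_subset _ _ _).trans (Finset.image_subset_image ?_)
  exact Finset.monotone_filter_right _ fun m _ (h : m k = 1) => by simp [h]

lemma plen_le_sum_card_add_one (Q : MvPolynomial (Fin n) (ZMod 2)) :
    plen Q ≤ ∑ m ∈ Q.support, m.support.card + 1 :=
  calc plen Q ≤ ∑ m ∈ Q.support, (m.support.card + if m = 0 then 1 else 0) :=
        Finset.sum_le_sum fun m _ => by split_ifs <;> simp_all
    _ = ∑ m ∈ Q.support, m.support.card + if 0 ∈ Q.support then 1 else 0 := by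
        rw [Finset.sum_add_distrib, Finset.sum_ite_eq']
    _ ≤ ∑ m ∈ Q.support, m.support.card + 1 := by gcongr; split_ifs <;> simp

lemma sum_card_support_add_one_le (I : MvPolynomial (Fin n) (ZMod 2)) :
    ∑ m ∈ (I + 1).support, m.support.card ≤ ∑ m ∈ I.support, m.support.card := by
  classical
  have hsub : (I + 1).support ⊆ insert 0 I.support := by
    simpa [support_one, Finset.union_comm] using support_add (p := I) (q := 1)
  calc ∑ m ∈ (I + 1).support, m.support.card
      ≤ ∑ m ∈ insert 0 I.support, m.support.card := Finset.sum_le_sum_of_subset hsub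
    _ = ∑ m ∈ I.support, m.support.card :=
        Finset.sum_insert_of_eq_zero_if_notMem fun _ => by simp

end Length

section KeyInequality

variable {n : ℕ} (k : Fin n) (Q : MvPolynomial (Fin n) (ZMod 2))

lemma plen_eq_sum_monoLen_add_sum_card :
    plen Q = ∑ m ∈ Q.support.filter (fun m => m k = 0), monoLen m +
      ∑ m ∈ Q.support.filter (fun m => m k ≠ 0), m.support.card := by
  rw [plen_eq_sum_monoLen, ← Finset.sum_filter_add_sum_filter_not Q.support fun m => m k = 0]
  refine congrArg _ (Finset.sum_congr rfl fun m hm => ?_)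
  have hm0 : m ≠ 0 := by rintro rfl; simp at hm
  simp [monoLen, hm0]

variable {k Q}

lemma plen_coefAt_add_one_le (hk : k ∈ Q.vars) :
    plen (coefAt k Q + 1) ≤ ∑ m ∈ Q.support.filter (fun m => m k ≠ 0), m.support.card := by
  classical
  set S := Q.support.filter fun m => m k ≠ 0
  obtain ⟨m₀, hm₀, hkm₀⟩ := (mem_vars_iff_mem_support k).1 hk
  have hlt : ∑ m ∈ S, (Finsupp.erase k m).support.card < ∑ m ∈ S, m.support.card := by
    refine Finset.sum_lt_sum (fun m _ => ?_) ⟨m₀, ?_, ?_⟩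
    · rw [Finsupp.support_erase]; exact Finset.card_erase_le
    · simpa [S, hm₀] using hkm₀
    · rw [Finsupp.support_erase]; exact Finset.card_erase_lt_of_mem hkm₀
  calc plen (coefAt k Q + 1)
      ≤ ∑ m ∈ (coefAt k Q + 1).support, m.support.card + 1 := plen_le_sum_card_add_one _
    _ ≤ ∑ m ∈ (coefAt k Q).support, m.support.card + 1 :=
        Nat.add_le_add_right (sum_card_support_add_one_le _) 1
    _ ≤ ∑ m ∈ S.image (Finsupp.erase k), m.support.card + 1 := by
        gcongr; exact support_coefAt_subset k Q
    _ ≤ ∑ m ∈ S, (Finsupp.erase k m).support.card + 1 :=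
        Nat.add_le_add_right (Finset.sum_image_le_of_nonneg fun _ _ => Nat.zero_le _) 1
    _ ≤ ∑ m ∈ S, m.support.card := hlt

lemma plen_remAt_add_plen_coefAt_add_one_le (hk : k ∈ Q.vars) :
    plen (remAt k Q) + plen (coefAt k Q + 1) ≤ plen Q := by
  rw [plen_eq_sum_monoLen_add_sum_card k Q, plen_eq_sum_monoLen]
  gcongr
  · exact support_remAt_subset k Q
  · exact plen_coefAt_add_one_le hk

lemma mem_vars_of_cls_eq (h : cls Q = (k : ℕ) + 1) : k ∈ Q.vars := by
  have hne : Q.vars.Nonempty := Finset.nonempty_iff_ne_empty.2 fun h0 => by simp [cls, h0] at h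
  obtain ⟨i, hi, hsup⟩ := Finset.exists_mem_eq_sup _ hne fun i : Fin n => (i : ℕ) + 1
  have hik : i = k := Fin.ext (by rw [cls] at h; omega)
  exact hik ▸ hi

variable (k Q)

lemma plen_opR_add_plen_opJ_le : plen (opR k Q) + plen (opJ k Q) ≤ plen Q := by
  unfold opR opJ
  split_ifs with h
  · exact plen_remAt_add_plen_coefAt_add_one_le (mem_vars_of_cls_eq h)
  · simp [plen]

end KeyInequality

section Composite

variable {n : ℕ}

lemma foldr_opE_congr {ε ε' : Fin n → Bool} {l : List (Fin n)} (h : ∀ i ∈ l, ε i = ε' i)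
    (Q : MvPolynomial (Fin n) (ZMod 2)) :
    l.foldr (fun i acc => opE (ε i) i acc) Q = l.foldr (fun i acc => opE (ε' i) i acc) Q := by
  induction l with
  | nil => rfl
  | cons a l ih =>
    simp only [List.foldr_cons, h a List.mem_cons_self,
      ih fun i hi => h i (List.mem_cons_of_mem a hi)]

lemma sum_plen_foldr_opE_le {p : Fin n → Prop} [DecidablePred p] [Fintype {i // p i}]
    {l : List (Fin n)} (hl : l.Nodup) (hp : ∀ i, p i ↔ i ∈ l) (Q : MvPolynomial (Fin n) (ZMod 2)) :
    ∑ η : {i // p i} → Bool,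
      plen (l.foldr (fun i acc => opE (if h : p i then η ⟨i, h⟩ else false) i acc) Q) ≤
      plen Q := by
  induction l generalizing p with
  | nil =>
    have : IsEmpty {i // p i} := ⟨fun i => by simpa using (hp i).1 i.2⟩
    simp
  | cons a l ih =>
    obtain ⟨hal, hl⟩ := List.nodup_cons.1 hl
    set F : ({i // i ∈ l} → Bool) → MvPolynomial (Fin n) (ZMod 2) := fun η =>
      l.foldr (fun i acc => opE (if h : i ∈ l then η ⟨i, h⟩ else false) i acc) Q
    have hstep : ∀ η b, (a :: l).foldr (fun i acc => opE
        (Function.update (fun i => if h : i ∈ l then η ⟨i, h⟩ else false) a b i) i acc) Q =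
        opE b a (F η) := fun η b => by
      rw [List.foldr_cons, Function.update_self]
      exact congrArg _ <| foldr_opE_congr
        (fun i hi => Function.update_of_ne (ne_of_mem_of_not_mem hi hal) _ _) Q
    calc _ = ∑ η : {i // i ∈ l} → Bool, ∑ b : Bool, plen (opE b a (F η)) := by
          simpa only [hstep] using sum_extend_eq_sum_sum_update (q := (· ∈ l))
            (by simpa using hp) hal fun ε => plen ((a :: l).foldr (fun i acc => opE (ε i) i acc) Q)
      _ = ∑ η : {i // i ∈ l} → Bool, (plen (opR a (F η)) + plen (opJ a (F η))) := by
          simp only [Fintype.sum_bool, opE, if_true, Bool.false_eq_true, if_false]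
      _ ≤ ∑ η : {i // i ∈ l} → Bool, plen (F η) :=
          Finset.sum_le_sum fun η _ => plen_opR_add_plen_opJ_le a (F η)
      _ ≤ plen Q := ih (p := (· ∈ l)) hl fun _ => Iff.rfl

end Composite

theorem stmt_19_general {n : ℕ} (P : MvPolynomial (Fin n) (ZMod 2))
    (j k : Fin n) :
    ∑ η : {i : Fin n // j ≤ i ∧ i ≤ k} → Bool,
      plen (compOp (fun i => if h : j ≤ i ∧ i ≤ k then η ⟨i, h⟩ else false) j k P) ≤
      plen P :=
  sum_plen_foldr_opE_le ((List.nodup_finRange n).filter _) (by simp) P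

/-- Let `P` be a multilinear Boolean polynomial with `cls P = k`, and let
`1 ≤ j ≤ k`. Summing over all `2^{k−j+1}` composite operators
`L = O_j ∘ ⋯ ∘ O_k` with each `O_i ∈ {R_i, J_i}`, we have `Σ_L ‖L(P)‖ ≤ ‖P‖`. -/
theorem stmt_19 {n : ℕ} (P : MvPolynomial (Fin n) (ZMod 2))
    (hml : ∀ i, degreeOf i P ≤ 1)
    (j k : Fin n) (hjk : j ≤ k) (hcls : cls P = (k : ℕ) + 1) :
    ∑ η : {i : Fin n // j ≤ i ∧ i ≤ k} → Bool,
      plen (compOp (fun i => if h : j ≤ i ∧ i ≤ k then η ⟨i, h⟩ else false) j k P) ≤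
      plen P :=
  stmt_19_general P j k
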